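/- arXiv:1811.07177 — 8 statements merged into one kernel-verified Lean document; each statement's English description precedes it below -/
import Mathlib

section
/- In a conjugation semigroup satisfying axioms (1)-(3), the quasi-identity $x+\overline{a}+a = y+\overline{a}+a \Rightarrow x = y$ (for all $x,y,a$) holds if and only if the semigroup is cancellative (both left and right cancellative). -/
section

variable {S : Type*} [AddSemigroup S] {conj : S → S}

theorem add_conj_add_eq_conj_add_add (h1 : ∀ x : S, conj x + x = x + conj x)
    (h2 : ∀ x y : S, x + conj y + y = y + conj y + x) (x a : S) :
    x + conj a + a = conj a + (a + x) := by
  rw [h2, ← h1, add_assoc]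

theorem add_conj_add_eq_add_add_conj (h1 : ∀ x : S, conj x + x = x + conj x) (x a : S) :
    x + conj a + a = x + a + conj a := by
  rw [add_assoc, h1, ← add_assoc]

end

theorem conj_semigroup_quasi_identity_iff_cancellative_general {S : Type*} [AddSemigroup S]
    (conj : S → S)
    (h1 : ∀ x : S, conj x + x = x + conj x)
    (h2 : ∀ x y : S, x + conj y + y = y + conj y + x) :
    (∀ x y a : S, x + conj a + a = y + conj a + a → x = y) ↔
      ((∀ a x y : S, a + x = a + y → x = y) ∧ (∀ a x y : S, x + a = y + a → x = y)) := by
  constructor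
  · intro hq
    refine ⟨fun a x y h => hq x y a ?_, fun a x y h => hq x y a ?_⟩
    · rw [add_conj_add_eq_conj_add_add h1 h2, add_conj_add_eq_conj_add_add h1 h2, h]
    · rw [add_conj_add_eq_add_add_conj h1, add_conj_add_eq_add_add_conj h1, h]
  · rintro ⟨-, hright⟩ x y a h
    exact hright _ _ _ (hright _ _ _ h)

theorem conj_semigroup_quasi_identity_iff_cancellative {S : Type*} [AddSemigroup S]
    (conj : S → S)
    (h1 : ∀ x : S, conj x + x = x + conj x)
    (h2 : ∀ x y : S, x + conj y + y = y + conj y + x)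
    (h3 : ∀ x y : S, conj (x + y) = conj y + conj x) :
    (∀ x y a : S, x + conj a + a = y + conj a + a → x = y) ↔
      ((∀ a x y : S, a + x = a + y → x = y) ∧ (∀ a x y : S, x + a = y + a → x = y)) :=
  conj_semigroup_quasi_identity_iff_cancellative_general conj h1 h2
end

section
/- Every cancellative conjugation semigroup embeds into a group, i.e., there is an injective semigroup homomorphism from $S$ into some group. -/
/-!
The map `N x = x + conj x` is an additive map into the centre of `S`, and `x` right-divides
`N x`. Centrality of the "denominators" is all that the Grothendieck construction needs: pairs
`(a, b)`, read as `a - N b`, modulo `a + N d = c + N b`, form a group into which `S` embeds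
via `x ↦ (x + N x) - N x`; the inverse of `a - N b` is `N b + a' - N a` where `a' + a = N a`.
-/

universe u

section

variable {S : Type u} [AddSemigroup S]

structure IsCentralNorm (N : S → S) : Prop where
  central : ∀ x y, x + N y = N y + x
  map_add : ∀ x y, N (x + y) = N x + N y
  exists_add_eq : ∀ x, ∃ y, y + x = N x

namespace IsCentralNorm

variable {N : S → S}

theorem add_right_comm (hN : IsCentralNorm N) (x y z : S) : x + N z + y = x + y + N z := by
  rw [add_assoc, ← hN.central y z, add_assoc]

theorem add_add_map_add (hN : IsCentralNorm N) (a b c d : S) :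
    a + b + N (c + d) = a + N c + (b + N d) := by
  rw [hN.map_add, ← add_assoc, ← hN.add_right_comm a b c, add_assoc]

variable [IsRightCancelAdd S]

def fracCon (hN : IsCentralNorm N) : AddCon (S × S) where
  r p q := p.1 + N q.2 = q.1 + N p.2
  iseqv.refl _ := rfl
  iseqv.symm := Eq.symm
  iseqv.trans {p q r} hpq hqr := add_right_cancel (b := N q.2) <| by
    rw [hN.add_right_comm, hpq, hN.add_right_comm, hqr, hN.add_right_comm]
  add' {p q p' q'} h h' := by
    simp only [Prod.fst_add, Prod.snd_add, hN.add_add_map_add, h, h']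

theorem fracCon_iff (hN : IsCentralNorm N) (p q : S × S) :
    hN.fracCon p q ↔ p.1 + N q.2 = q.1 + N p.2 := Iff.rfl

theorem coe_norm_self_add (hN : IsCentralNorm N) (e : S) (q : hN.fracCon.Quotient) :
    ((N e, e) : hN.fracCon.Quotient) + q = q := by
  induction q using AddCon.induction_on with | _ q
  rw [← AddCon.coe_add, AddCon.eq, fracCon_iff]
  dsimp only [Prod.fst_add, Prod.snd_add]
  rw [← hN.central, hN.map_add, add_assoc]

theorem exists_add_eq_coe_norm_self (hN : IsCentralNorm N) (e : S) (q : hN.fracCon.Quotient) :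
    ∃ q', q' + q = ((N e, e) : hN.fracCon.Quotient) := by
  induction q using AddCon.induction_on with | _ q
  obtain ⟨a, b⟩ := q
  obtain ⟨a', ha'⟩ := hN.exists_add_eq a
  refine ⟨((N b + a', a) : S × S), ?_⟩
  rw [← AddCon.coe_add, AddCon.eq, fracCon_iff]
  dsimp only [Prod.fst_add, Prod.snd_add]
  rw [add_assoc (N b), ha', hN.map_add, hN.central (N a)]
  exact hN.central _ e

noncomputable abbrev fracAddGroup (hN : IsCentralNorm N) (e : S) : AddGroup hN.fracCon.Quotient :=
  letI : Zero hN.fracCon.Quotient := ⟨((N e, e) : S × S)⟩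
  letI : Neg hN.fracCon.Quotient := ⟨fun q => (hN.exists_add_eq_coe_norm_self e q).choose⟩
  AddGroup.ofLeftAxioms add_assoc (hN.coe_norm_self_add e)
    fun q => (hN.exists_add_eq_coe_norm_self e q).choose_spec

def toFrac (hN : IsCentralNorm N) (x : S) : hN.fracCon.Quotient := ((x + N x, x) : S × S)

theorem toFrac_add (hN : IsCentralNorm N) (x y : S) :
    hN.toFrac (x + y) = hN.toFrac x + hN.toFrac y := by
  rw [toFrac, toFrac, toFrac, ← AddCon.coe_add, Prod.mk_add_mk, hN.add_add_map_add]

theorem toFrac_injective (hN : IsCentralNorm N) : Function.Injective hN.toFrac := by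
  intro x y h
  rw [toFrac, toFrac, AddCon.eq, fracCon_iff] at h
  dsimp only at h
  rw [hN.add_right_comm y (N x) y] at h
  exact add_right_cancel (add_right_cancel h)

theorem exists_addGroup_embedding (hN : IsCentralNorm N) :
    ∃ (G : Type u) (_ : AddGroup G) (φ : S → G),
      (∀ x y : S, φ (x + y) = φ x + φ y) ∧ Function.Injective φ := by
  rcases isEmpty_or_nonempty S with hS | ⟨⟨e⟩⟩
  · exact ⟨PUnit, inferInstance, fun _ => 0, fun _ _ => rfl, fun x => hS.elim x⟩
  · exact ⟨_, hN.fracAddGroup e, hN.toFrac, hN.toFrac_add, hN.toFrac_injective⟩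

end IsCentralNorm

section Conjugation

variable {conj : S → S}

theorem add_add_conj_comm (h1 : ∀ x : S, conj x + x = x + conj x)
    (h2 : ∀ x y : S, x + conj y + y = y + conj y + x) (x y : S) :
    x + (y + conj y) = y + conj y + x := by
  rw [← h2, add_assoc, h1]

theorem isCentralNorm_add_conj (h1 : ∀ x : S, conj x + x = x + conj x)
    (h2 : ∀ x y : S, x + conj y + y = y + conj y + x)
    (h3 : ∀ x y : S, conj (x + y) = conj y + conj x) :
    IsCentralNorm fun x => x + conj x where
  central := add_add_conj_comm h1 h2
  map_add x y := calc
    x + y + conj (x + y) = x + (y + conj y) + conj x := by simp only [h3, add_assoc]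
    _ = y + conj y + (x + conj x) := by rw [add_add_conj_comm h1 h2, add_assoc]
    _ = x + conj x + (y + conj y) := (add_add_conj_comm h1 h2 _ _).symm
  exists_add_eq x := ⟨conj x, h1 x⟩

end Conjugation

end

theorem cancellative_conj_semigroup_embeds_in_group_general {S : Type} [AddSemigroup S]
    (conj : S → S)
    (hrc : ∀ a x y : S, x + a = y + a → x = y)
    (h1 : ∀ x : S, conj x + x = x + conj x)
    (h2 : ∀ x y : S, x + conj y + y = y + conj y + x)
    (h3 : ∀ x y : S, conj (x + y) = conj y + conj x) :
    ∃ (G : Type) (_ : AddGroup G) (φ : S → G),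
      (∀ x y : S, φ (x + y) = φ x + φ y) ∧ Function.Injective φ := by
  have : IsRightCancelAdd S := ⟨fun a _ _ h => hrc a _ _ h⟩
  exact (isCentralNorm_add_conj h1 h2 h3).exists_addGroup_embedding

theorem cancellative_conj_semigroup_embeds_in_group {S : Type} [AddSemigroup S]
    (conj : S → S)
    (hlc : ∀ a x y : S, a + x = a + y → x = y)
    (hrc : ∀ a x y : S, x + a = y + a → x = y)
    (h1 : ∀ x : S, conj x + x = x + conj x)
    (h2 : ∀ x y : S, x + conj y + y = y + conj y + x)
    (h3 : ∀ x y : S, conj (x + y) = conj y + conj x) :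
    ∃ (G : Type) (_ : AddGroup G) (φ : S → G),
      (∀ x y : S, φ (x + y) = φ x + φ y) ∧ Function.Injective φ :=
  cancellative_conj_semigroup_embeds_in_group_general conj hrc h1 h2 h3
end

section
/- Given a Schreier split epimorphism of monoids with Schreier retraction $q$, the identity $q(a+a') = q(a) + q(r(f(a)) + k(q(a')))$ holds for all $a, a' \in A$. -/
/-!
Write `a + a' = k (q a) + (r (f a) + k (q a')) + r (f a')`. The middle term
`u = r (f a) + k (q a')` lies over `f a`, so it decomposes as `u = k (q u) + r (f a)`; regrouping gives
`a + a' = k (q a + q u) + r (f (a + a'))`, and `q` reads off the kernel component of such a sum.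
-/

section SchreierRetraction

variable {X A B : Type*} [Add A] {f : A → B} {r : B → A} {k : X → A} {q : A → X}

lemma retraction_eq_of_eq_add (hq2 : ∀ (x : X) (b : B), x = q (k x + r b))
    {a : A} {x : X} {b : B} (h : a = k x + r b) : q a = x := by
  rw [h, ← hq2]

lemma eq_add_of_apply_eq (hq1 : ∀ a : A, a = k (q a) + r (f a)) {u a : A} (h : f u = f a) :
    u = k (q u) + r (f a) :=
  h ▸ hq1 u

end SchreierRetraction

theorem schreier_retraction_add_general {X A B : Type*} [AddMonoid X] [AddMonoid A] [AddMonoid B]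
    (f : A → B) (r : B → A) (k : X → A) (q : A → X)
    (hfadd : ∀ a a' : A, f (a + a') = f a + f a')
    (hradd : ∀ b b' : B, r (b + b') = r b + r b')
    (hkadd : ∀ x x' : X, k (x + x') = k x + k x')
    (hfr : ∀ b : B, f (r b) = b)
    (hker : ∀ x : X, f (k x) = 0)
    (hq1 : ∀ a : A, a = k (q a) + r (f a))
    (hq2 : ∀ (x : X) (b : B), x = q (k x + r b)) :
    ∀ a a' : A, q (a + a') = q a + q (r (f a) + k (q a')) := by
  intro a a'
  set u := r (f a) + k (q a')
  have hu : u = k (q u) + r (f a) :=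
    eq_add_of_apply_eq hq1 (by rw [hfadd, hfr, hker, add_zero])
  refine retraction_eq_of_eq_add hq2 (b := f (a + a')) ?_
  calc a + a' = k (q a) + r (f a) + (k (q a') + r (f a')) := by rw [← hq1, ← hq1]
    _ = k (q a) + u + r (f a') := by simp only [u, add_assoc]
    _ = k (q a + q u) + r (f (a + a')) := by
      conv_lhs => rw [hu]
      rw [hkadd, hfadd, hradd]
      simp only [add_assoc]

theorem schreier_retraction_add {X A B : Type*} [AddMonoid X] [AddMonoid A] [AddMonoid B]
    (f : A → B) (r : B → A) (k : X → A) (q : A → X)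
    (hfadd : ∀ a a' : A, f (a + a') = f a + f a') (hf0 : f 0 = 0)
    (hradd : ∀ b b' : B, r (b + b') = r b + r b') (hr0 : r 0 = 0)
    (hkadd : ∀ x x' : X, k (x + x') = k x + k x') (hk0 : k 0 = 0)
    (hfr : ∀ b : B, f (r b) = b)
    (hkinj : Function.Injective k)
    (hker : ∀ x : X, f (k x) = 0)
    (hker' : ∀ a : A, f a = 0 → ∃ x : X, k x = a)
    (hq1 : ∀ a : A, a = k (q a) + r (f a))
    (hq2 : ∀ (x : X) (b : B), x = q (k x + r b)) :
    ∀ a a' : A, q (a + a') = q a + q (r (f a) + k (q a')) :=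
  schreier_retraction_add_general f r k q hfadd hradd hkadd hfr hker hq1 hq2
end

section
/- Given a Schreier split epimorphism in the category of cancellative conjugation monoids, with Schreier retraction $q$ and induced action $b\cdot x := q(r(b)+k(x))$, the identity $q(\overline{a}) = f(\overline{a})\cdot \overline{q(a)}$ holds for all $a \in A$. -/
theorem conj_eq_retraction_add_kernel {X A B : Type*} [Add A]
    (cX : X → X) (cA : A → A) (cB : B → B)
    (f : A → B) (r : B → A) (k : X → A) (q : A → X)
    (hcA : ∀ a a' : A, cA (a + a') = cA a' + cA a)
    (hfc : ∀ a : A, f (cA a) = cB (f a)) (hrc : ∀ b : B, r (cB b) = cA (r b))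
    (hkc : ∀ x : X, k (cX x) = cA (k x)) {a : A} (ha : a = k (q a) + r (f a)) :
    cA a = r (f (cA a)) + k (cX (q a)) := by
  conv_lhs => rw [ha]
  rw [hcA, hfc, hrc, hkc]

theorem schreier_retraction_conjugation_general
    {X A B : Type*} [AddCancelMonoid A]
    (cX : X → X) (cA : A → A) (cB : B → B)
    (hA3 : ∀ a a' : A, cA (a + a') = cA a' + cA a)
    (f : A → B) (r : B → A) (k : X → A) (q : A → X)
    (hfc : ∀ a : A, f (cA a) = cB (f a))
    (hrc : ∀ b : B, r (cB b) = cA (r b))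
    (hkc : ∀ x : X, k (cX x) = cA (k x))
    (hq1 : ∀ a : A, a = k (q a) + r (f a)) :
    ∀ a : A, q (cA a) = q (r (f (cA a)) + k (cX (q a))) := fun a =>
  congrArg q (conj_eq_retraction_add_kernel cX cA cB f r k q hA3 hfc hrc hkc (hq1 a))

theorem schreier_retraction_conjugation
    {X A B : Type*} [AddCancelMonoid X] [AddCancelMonoid A] [AddCancelMonoid B]
    (cX : X → X) (cA : A → A) (cB : B → B)
    (hX1 : ∀ x : X, cX x + x = x + cX x)
    (hX2 : ∀ x y : X, x + cX y + y = y + cX y + x)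
    (hX3 : ∀ x y : X, cX (x + y) = cX y + cX x)
    (hA1 : ∀ a : A, cA a + a = a + cA a)
    (hA2 : ∀ a a' : A, a + cA a' + a' = a' + cA a' + a)
    (hA3 : ∀ a a' : A, cA (a + a') = cA a' + cA a)
    (hB1 : ∀ b : B, cB b + b = b + cB b)
    (hB2 : ∀ b b' : B, b + cB b' + b' = b' + cB b' + b)
    (hB3 : ∀ b b' : B, cB (b + b') = cB b' + cB b)
    (f : A → B) (r : B → A) (k : X → A) (q : A → X)
    (hfadd : ∀ a a' : A, f (a + a') = f a + f a') (hf0 : f 0 = 0)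
    (hfc : ∀ a : A, f (cA a) = cB (f a))
    (hradd : ∀ b b' : B, r (b + b') = r b + r b') (hr0 : r 0 = 0)
    (hrc : ∀ b : B, r (cB b) = cA (r b))
    (hkadd : ∀ x x' : X, k (x + x') = k x + k x') (hk0 : k 0 = 0)
    (hkc : ∀ x : X, k (cX x) = cA (k x))
    (hfr : ∀ b : B, f (r b) = b)
    (hkinj : Function.Injective k)
    (hker : ∀ x : X, f (k x) = 0)
    (hker' : ∀ a : A, f a = 0 → ∃ x : X, k x = a)
    (hq1 : ∀ a : A, a = k (q a) + r (f a))
    (hq2 : ∀ (x : X) (b : B), x = q (k x + r b)) :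
    ∀ a : A, q (cA a) = q (r (f (cA a)) + k (cX (q a))) :=
  schreier_retraction_conjugation_general cX cA cB hA3 f r k q hfc hrc hkc hq1
end

section
/- Let $X, B$ be cancellative conjugation monoids and $\varphi$ an action of $B$ on $X$ such that the semidirect product $X\rtimes_\varphi B$, equipped with $\overline{(x,b)}=(\overline{b}\cdot\overline{x},\overline{b})$, is a conjugation monoid. Then the conjugation axiom $\overline{s}+s = s+\overline{s}$ on $X\rtimes_\varphi B$ is equivalent to: $\overline{b}\cdot(\overline{x}+x) = x + (b+\overline{b})\cdot\overline{x}$ for all $b\in B$, $x\in X$. -/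
theorem semidirect_conjugation_axiom_one_iff_general
    {X B : Type*} [AddCancelMonoid X] [AddCancelMonoid B]
    (cX : X → X) (cB : B → B)
    (hB1 : ∀ b : B, cB b + b = b + cB b)
    (φ : B → X → X)
    (hφadd : ∀ (b : B) (x y : X), φ b (x + y) = φ b x + φ b y)
    (hφcomp : ∀ (b b' : B) (x : X), φ (b + b') x = φ b (φ b' x)) :
    (∀ p : X × B,
        ((φ (cB p.2) (cX p.1) + φ (cB p.2) p.1, cB p.2 + p.2) : X × B) =
          (p.1 + φ p.2 (φ (cB p.2) (cX p.1)), p.2 + cB p.2)) ↔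
      (∀ (b : B) (x : X), φ (cB b) (cX x + x) = x + φ (b + cB b) (cX x)) := by
  -- The `B`-component is the axiom in `B`; the `X`-component is the claim once `φ` is distributed.
  simp only [Prod.ext_iff, hB1, and_true, Prod.forall, hφadd, hφcomp]
  exact forall_comm

theorem semidirect_conjugation_axiom_one_iff
    {X B : Type*} [AddCancelMonoid X] [AddCancelMonoid B]
    (cX : X → X) (cB : B → B)
    (hX1 : ∀ x : X, cX x + x = x + cX x)
    (hX2 : ∀ x y : X, x + cX y + y = y + cX y + x)
    (hX3 : ∀ x y : X, cX (x + y) = cX y + cX x)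
    (hB1 : ∀ b : B, cB b + b = b + cB b)
    (hB2 : ∀ b b' : B, b + cB b' + b' = b' + cB b' + b)
    (hB3 : ∀ b b' : B, cB (b + b') = cB b' + cB b)
    (φ : B → X → X)
    (hφadd : ∀ (b : B) (x y : X), φ b (x + y) = φ b x + φ b y)
    (hφ0 : ∀ b : B, φ b 0 = 0)
    (hφid : ∀ x : X, φ 0 x = x)
    (hφcomp : ∀ (b b' : B) (x : X), φ (b + b') x = φ b (φ b' x)) :
    (∀ p : X × B,
        ((φ (cB p.2) (cX p.1) + φ (cB p.2) p.1, cB p.2 + p.2) : X × B) =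
          (p.1 + φ p.2 (φ (cB p.2) (cX p.1)), p.2 + cB p.2)) ↔
      (∀ (b : B) (x : X), φ (cB b) (cX x + x) = x + φ (b + cB b) (cX x)) :=
  semidirect_conjugation_axiom_one_iff_general cX cB hB1 φ hφadd hφcomp
end

section
/- Given a Schreier split epimorphism $f: A\to B$, $r: B\to A$, kernel $k: X\to A$, retraction $q$, in the category of cancellative conjugation monoids, and a morphism $h: X\to B$, there exists a conjugation-monoid homomorphism $\tilde h: A\to B$ with $\tilde h\circ k = h$ and $\tilde h\circ r = 1_B$ if and only if $h(b\cdot x)+b = b+h(x)$ for all $b\in B$, $x\in X$, where $b\cdot x = q(r(b)+k(x))$. In that case $\tilde h(a)=h(q(a))+f(a)$. -/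
/-!
Every `a : A` decomposes uniquely as `k (q a) + r (f a)`, so a morphism `th` with `th ∘ k = h` and
`th ∘ r = id` must be `a ↦ h (q a) + f a`. Writing `b · x := q (r b + k x)`,
`r b + k x = k (b · x) + r b`, so applying `th` yields the compatibility condition. Conversely, the same
identity computes `q (a + a') = q a + f a · q a'`, and the condition `h (b · x) + b = b + h x` is exactly
what lets `f a` move past `h (q a')` in `h (q (a + a')) + f (a + a')`; conjugation is handled the same
way, since `cA a = r (cB (f a)) + k (cX (q a))`.
-/

section

variable {X A B : Type*} [AddMonoid X] [AddMonoid A] [AddMonoid B]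

/-- `q_k_add_r` encodes the uniqueness of the decomposition `a = k (q a) + r (f a)`. -/
structure IsSchreierSplitEpi (f : A →+ B) (r : B →+ A) (k : X →+ A) (q : A → X) : Prop where
  f_r : ∀ b, f (r b) = b
  f_k : ∀ x, f (k x) = 0
  k_q_add_r_f : ∀ a, k (q a) + r (f a) = a
  q_k_add_r : ∀ x b, q (k x + r b) = x

namespace IsSchreierSplitEpi

variable {f : A →+ B} {r : B →+ A} {k : X →+ A} {q : A → X}

theorem q_k (hS : IsSchreierSplitEpi f r k q) (x : X) : q (k x) = x := by
  simpa using hS.q_k_add_r x 0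

theorem q_r (hS : IsSchreierSplitEpi f r k q) (b : B) : q (r b) = 0 := by
  simpa using hS.q_k_add_r 0 b

theorem r_add_k (hS : IsSchreierSplitEpi f r k q) (b : B) (x : X) :
    r b + k x = k (q (r b + k x)) + r b := by
  conv_lhs => rw [← hS.k_q_add_r_f (r b + k x)]
  rw [map_add, hS.f_r, hS.f_k, add_zero]

theorem q_add (hS : IsSchreierSplitEpi f r k q) (a a' : A) :
    q (a + a') = q a + q (r (f a) + k (q a')) := by
  conv_lhs => rw [← hS.k_q_add_r_f a, ← hS.k_q_add_r_f a']
  rw [add_assoc, ← add_assoc (r (f a)), hS.r_add_k (f a) (q a'), ← add_assoc, ← add_assoc,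
    ← map_add, add_assoc, ← map_add, hS.q_k_add_r, ← hS.r_add_k]

theorem q_conj (hS : IsSchreierSplitEpi f r k q) {cX : X → X} {cA : A → A} {cB : B → B}
    (hA : ∀ a a', cA (a + a') = cA a' + cA a) (hrc : ∀ b, r (cB b) = cA (r b))
    (hkc : ∀ x, k (cX x) = cA (k x)) (a : A) :
    q (cA a) = q (r (cB (f a)) + k (cX (q a))) := by
  conv_lhs => rw [← hS.k_q_add_r_f a, hA, ← hrc, ← hkc]

theorem eq_of_comp (hS : IsSchreierSplitEpi f r k q) {h : X → B} (th : A →+ B)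
    (thk : ∀ x, th (k x) = h x) (thr : ∀ b, th (r b) = b) (a : A) :
    th a = h (q a) + f a := by
  conv_lhs => rw [← hS.k_q_add_r_f a]
  rw [map_add, thk, thr]

theorem compat_of_comp (hS : IsSchreierSplitEpi f r k q) {h : X → B} (th : A →+ B)
    (thk : ∀ x, th (k x) = h x) (thr : ∀ b, th (r b) = b) (b : B) (x : X) :
    h (q (r b + k x)) + b = b + h x := by
  calc h (q (r b + k x)) + b = th (k (q (r b + k x)) + r b) := by rw [map_add, thk, thr]
    _ = th (r b + k x) := by rw [← hS.r_add_k]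
    _ = b + h x := by rw [map_add, thr, thk]

def lift (hS : IsSchreierSplitEpi f r k q) (h : X →+ B)
    (hh : ∀ b x, h (q (r b + k x)) + b = b + h x) : A →+ B where
  toFun a := h (q a) + f a
  map_zero' := by rw [← map_zero r, hS.q_r, hS.f_r, map_zero, add_zero]
  map_add' a a' := by
    rw [hS.q_add, map_add, map_add, add_assoc, ← add_assoc (h _) (f a), hh, add_assoc, ← add_assoc]

variable (hS : IsSchreierSplitEpi f r k q) (h : X →+ B)
  (hh : ∀ b x, h (q (r b + k x)) + b = b + h x)
include hS hh

theorem lift_apply (a : A) : hS.lift h hh a = h (q a) + f a := rfl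

theorem lift_k (x : X) : hS.lift h hh (k x) = h x := by
  rw [lift_apply, hS.q_k, hS.f_k, add_zero]

theorem lift_r (b : B) : hS.lift h hh (r b) = b := by
  rw [lift_apply, hS.q_r, hS.f_r, map_zero, zero_add]

theorem lift_conj {cX : X → X} {cA : A → A} {cB : B → B}
    (hA : ∀ a a', cA (a + a') = cA a' + cA a) (hB : ∀ b b', cB (b + b') = cB b' + cB b)
    (hfc : ∀ a, f (cA a) = cB (f a)) (hrc : ∀ b, r (cB b) = cA (r b))
    (hkc : ∀ x, k (cX x) = cA (k x)) (hhc : ∀ x, h (cX x) = cB (h x)) (a : A) :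
    hS.lift h hh (cA a) = cB (hS.lift h hh a) := by
  rw [lift_apply, lift_apply, hB, ← hhc, hfc, hS.q_conj hA hrc hkc, hh]

end IsSchreierSplitEpi

end

theorem precrossed_semimodule_iff_reflexive_graph_general
    {X A B : Type*} [AddCancelMonoid X] [AddCancelMonoid A] [AddCancelMonoid B]
    (cX : X → X) (cA : A → A) (cB : B → B)
    (hA3 : ∀ a a' : A, cA (a + a') = cA a' + cA a)
    (hB3 : ∀ b b' : B, cB (b + b') = cB b' + cB b)
    (f : A → B) (r : B → A) (k : X → A) (q : A → X)
    (hfadd : ∀ a a' : A, f (a + a') = f a + f a') (hf0 : f 0 = 0)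
    (hfc : ∀ a : A, f (cA a) = cB (f a))
    (hradd : ∀ b b' : B, r (b + b') = r b + r b') (hr0 : r 0 = 0)
    (hrc : ∀ b : B, r (cB b) = cA (r b))
    (hkadd : ∀ x x' : X, k (x + x') = k x + k x') (hk0 : k 0 = 0)
    (hkc : ∀ x : X, k (cX x) = cA (k x))
    (hfr : ∀ b : B, f (r b) = b)
    (hker : ∀ x : X, f (k x) = 0)
    (hq1 : ∀ a : A, a = k (q a) + r (f a))
    (hq2 : ∀ (x : X) (b : B), x = q (k x + r b))
    (h : X → B)
    (hhadd : ∀ x x' : X, h (x + x') = h x + h x') (hh0 : h 0 = 0)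
    (hhc : ∀ x : X, h (cX x) = cB (h x)) :
    ((∃ th : A → B,
        (∀ a a' : A, th (a + a') = th a + th a') ∧ th 0 = 0 ∧
        (∀ a : A, th (cA a) = cB (th a)) ∧
        (∀ x : X, th (k x) = h x) ∧ (∀ b : B, th (r b) = b)) ↔
      (∀ (b : B) (x : X), h (q (r b + k x)) + b = b + h x)) ∧
    (∀ th : A → B,
      ((∀ a a' : A, th (a + a') = th a + th a') ∧ th 0 = 0 ∧
        (∀ a : A, th (cA a) = cB (th a)) ∧
        (∀ x : X, th (k x) = h x) ∧ (∀ b : B, th (r b) = b)) →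
      ∀ a : A, th a = h (q a) + f a) := by
  let f' : A →+ B := { toFun := f, map_zero' := hf0, map_add' := hfadd }
  let r' : B →+ A := { toFun := r, map_zero' := hr0, map_add' := hradd }
  let k' : X →+ A := { toFun := k, map_zero' := hk0, map_add' := hkadd }
  let h' : X →+ B := { toFun := h, map_zero' := hh0, map_add' := hhadd }
  have hS : IsSchreierSplitEpi f' r' k' q :=
    ⟨hfr, hker, fun a => (hq1 a).symm, fun x b => (hq2 x b).symm⟩
  refine ⟨⟨?_, fun hh => ?_⟩, ?_⟩
  · rintro ⟨th, thadd, th0, -, thk, thr⟩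
    exact hS.compat_of_comp { toFun := th, map_zero' := th0, map_add' := thadd } thk thr
  · exact ⟨hS.lift h' hh, map_add _, map_zero _, hS.lift_conj h' hh hA3 hB3 hfc hrc hkc hhc,
      hS.lift_k h' hh, hS.lift_r h' hh⟩
  · rintro th ⟨thadd, th0, -, thk, thr⟩
    exact hS.eq_of_comp { toFun := th, map_zero' := th0, map_add' := thadd } thk thr

theorem precrossed_semimodule_iff_reflexive_graph
    {X A B : Type*} [AddCancelMonoid X] [AddCancelMonoid A] [AddCancelMonoid B]
    (cX : X → X) (cA : A → A) (cB : B → B)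
    (hX1 : ∀ x : X, cX x + x = x + cX x)
    (hX2 : ∀ x y : X, x + cX y + y = y + cX y + x)
    (hX3 : ∀ x y : X, cX (x + y) = cX y + cX x)
    (hA1 : ∀ a : A, cA a + a = a + cA a)
    (hA2 : ∀ a a' : A, a + cA a' + a' = a' + cA a' + a)
    (hA3 : ∀ a a' : A, cA (a + a') = cA a' + cA a)
    (hB1 : ∀ b : B, cB b + b = b + cB b)
    (hB2 : ∀ b b' : B, b + cB b' + b' = b' + cB b' + b)
    (hB3 : ∀ b b' : B, cB (b + b') = cB b' + cB b)
    (f : A → B) (r : B → A) (k : X → A) (q : A → X)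
    (hfadd : ∀ a a' : A, f (a + a') = f a + f a') (hf0 : f 0 = 0)
    (hfc : ∀ a : A, f (cA a) = cB (f a))
    (hradd : ∀ b b' : B, r (b + b') = r b + r b') (hr0 : r 0 = 0)
    (hrc : ∀ b : B, r (cB b) = cA (r b))
    (hkadd : ∀ x x' : X, k (x + x') = k x + k x') (hk0 : k 0 = 0)
    (hkc : ∀ x : X, k (cX x) = cA (k x))
    (hfr : ∀ b : B, f (r b) = b)
    (hkinj : Function.Injective k)
    (hker : ∀ x : X, f (k x) = 0)
    (hker' : ∀ a : A, f a = 0 → ∃ x : X, k x = a)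
    (hq1 : ∀ a : A, a = k (q a) + r (f a))
    (hq2 : ∀ (x : X) (b : B), x = q (k x + r b))
    (h : X → B)
    (hhadd : ∀ x x' : X, h (x + x') = h x + h x') (hh0 : h 0 = 0)
    (hhc : ∀ x : X, h (cX x) = cB (h x)) :
    ((∃ th : A → B,
        (∀ a a' : A, th (a + a') = th a + th a') ∧ th 0 = 0 ∧
        (∀ a : A, th (cA a) = cB (th a)) ∧
        (∀ x : X, th (k x) = h x) ∧ (∀ b : B, th (r b) = b)) ↔
      (∀ (b : B) (x : X), h (q (r b + k x)) + b = b + h x)) ∧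
    (∀ th : A → B,
      ((∀ a a' : A, th (a + a') = th a + th a') ∧ th 0 = 0 ∧
        (∀ a : A, th (cA a) = cB (th a)) ∧
        (∀ x : X, th (k x) = h x) ∧ (∀ b : B, th (r b) = b)) →
      ∀ a : A, th a = h (q a) + f a) :=
  precrossed_semimodule_iff_reflexive_graph_general cX cA cB hA3 hB3 f r k q hfadd hf0 hfc hradd hr0
    hrc hkadd hk0 hkc hfr hker hq1 hq2 h hhadd hh0 hhc
end

section
/- With notation as in the setup, if a map $\tilde h: A\to B$ satisfies $\tilde h(a)=h(q(a))+f(a)$ for all $a$ and is additive, then it automatically preserves conjugation: $\tilde h(\overline{a}) = \overline{\tilde h(a)}$ for all $a\in A$. -/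
/-!
Decompose `a = k (q a) + r (f a)`. Since conjugation reverses sums and commutes with `k`, `r`,
`cA a = r (cB (f a)) + k (cX (q a))`. The map `th` restricts to `h` on the kernel and to the
identity on the section, so additivity gives `th (cA a) = cB (f a) + cB (h (q a))`, which is
`cB (h (q a) + f a) = cB (th a)` because `cB` reverses sums.
-/

section SchreierRetraction

variable {X A B : Type*}

theorem schreier_retraction_kernel_apply [AddZeroClass A] [Zero B]
    {k : X → A} {r : B → A} {q : A → X} (hr0 : r 0 = 0)
    (hq2 : ∀ (x : X) (b : B), x = q (k x + r b)) (x : X) : q (k x) = x := by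
  simpa [hr0] using (hq2 x 0).symm

theorem schreier_retraction_section_apply [Zero X] [AddZeroClass A]
    {k : X → A} {r : B → A} {q : A → X} (hk0 : k 0 = 0)
    (hq2 : ∀ (x : X) (b : B), x = q (k x + r b)) (b : B) : q (r b) = 0 := by
  simpa [hk0] using (hq2 0 b).symm

theorem conj_eq_section_add_kernel [Add A]
    {cX : X → X} {cA : A → A} {cB : B → B}
    {f : A → B} {r : B → A} {k : X → A} {q : A → X}
    (hA3 : ∀ a a' : A, cA (a + a') = cA a' + cA a)
    (hrc : ∀ b : B, r (cB b) = cA (r b)) (hkc : ∀ x : X, k (cX x) = cA (k x))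
    (hq1 : ∀ a : A, a = k (q a) + r (f a)) (a : A) :
    cA a = r (cB (f a)) + k (cX (q a)) := by
  conv_lhs => rw [hq1 a]
  rw [hA3, hrc, hkc]

end SchreierRetraction

section InducedMap

variable {X A B : Type*} [AddZeroClass B]
  {f : A → B} {k : X → A} {q : A → X} {h : X → B} {th : A → B}

theorem induced_map_kernel_apply (hthdef : ∀ a : A, th a = h (q a) + f a)
    (hqk : ∀ x : X, q (k x) = x) (hker : ∀ x : X, f (k x) = 0) (x : X) : th (k x) = h x := by
  rw [hthdef, hqk, hker, add_zero]

theorem induced_map_section_apply [Zero X] {r : B → A} (hthdef : ∀ a : A, th a = h (q a) + f a)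
    (hqr : ∀ b : B, q (r b) = 0) (hh0 : h 0 = 0) (hfr : ∀ b : B, f (r b) = b) (b : B) :
    th (r b) = b := by
  rw [hthdef, hqr, hh0, zero_add, hfr]

end InducedMap

theorem induced_morphism_preserves_conjugation_general
    {X A B : Type*} [AddCancelMonoid X] [AddCancelMonoid A] [AddCancelMonoid B]
    (cX : X → X) (cA : A → A) (cB : B → B)
    (hA3 : ∀ a a' : A, cA (a + a') = cA a' + cA a)
    (hB3 : ∀ b b' : B, cB (b + b') = cB b' + cB b)
    (f : A → B) (r : B → A) (k : X → A) (q : A → X)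
    (hr0 : r 0 = 0)
    (hrc : ∀ b : B, r (cB b) = cA (r b))
    (hk0 : k 0 = 0)
    (hkc : ∀ x : X, k (cX x) = cA (k x))
    (hfr : ∀ b : B, f (r b) = b)
    (hker : ∀ x : X, f (k x) = 0)
    (hq1 : ∀ a : A, a = k (q a) + r (f a))
    (hq2 : ∀ (x : X) (b : B), x = q (k x + r b))
    (h : X → B)
    (hh0 : h 0 = 0)
    (hhc : ∀ x : X, h (cX x) = cB (h x))
    (th : A → B)
    (hthdef : ∀ a : A, th a = h (q a) + f a)
    (hthadd : ∀ a a' : A, th (a + a') = th a + th a') :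
    ∀ a : A, th (cA a) = cB (th a) := by
  intro a
  have hthk := induced_map_kernel_apply hthdef (schreier_retraction_kernel_apply hr0 hq2) hker
  have hthr := induced_map_section_apply hthdef (schreier_retraction_section_apply hk0 hq2) hh0 hfr
  rw [conj_eq_section_add_kernel hA3 hrc hkc hq1 a, hthadd, hthr, hthk, hhc, hthdef a, hB3]

theorem induced_morphism_preserves_conjugation
    {X A B : Type*} [AddCancelMonoid X] [AddCancelMonoid A] [AddCancelMonoid B]
    (cX : X → X) (cA : A → A) (cB : B → B)
    (hX1 : ∀ x : X, cX x + x = x + cX x)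
    (hX2 : ∀ x y : X, x + cX y + y = y + cX y + x)
    (hX3 : ∀ x y : X, cX (x + y) = cX y + cX x)
    (hA1 : ∀ a : A, cA a + a = a + cA a)
    (hA2 : ∀ a a' : A, a + cA a' + a' = a' + cA a' + a)
    (hA3 : ∀ a a' : A, cA (a + a') = cA a' + cA a)
    (hB1 : ∀ b : B, cB b + b = b + cB b)
    (hB2 : ∀ b b' : B, b + cB b' + b' = b' + cB b' + b)
    (hB3 : ∀ b b' : B, cB (b + b') = cB b' + cB b)
    (f : A → B) (r : B → A) (k : X → A) (q : A → X)
    (hfadd : ∀ a a' : A, f (a + a') = f a + f a') (hf0 : f 0 = 0)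
    (hfc : ∀ a : A, f (cA a) = cB (f a))
    (hradd : ∀ b b' : B, r (b + b') = r b + r b') (hr0 : r 0 = 0)
    (hrc : ∀ b : B, r (cB b) = cA (r b))
    (hkadd : ∀ x x' : X, k (x + x') = k x + k x') (hk0 : k 0 = 0)
    (hkc : ∀ x : X, k (cX x) = cA (k x))
    (hfr : ∀ b : B, f (r b) = b)
    (hkinj : Function.Injective k)
    (hker : ∀ x : X, f (k x) = 0)
    (hker' : ∀ a : A, f a = 0 → ∃ x : X, k x = a)
    (hq1 : ∀ a : A, a = k (q a) + r (f a))
    (hq2 : ∀ (x : X) (b : B), x = q (k x + r b))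
    (h : X → B)
    (hhadd : ∀ x x' : X, h (x + x') = h x + h x') (hh0 : h 0 = 0)
    (hhc : ∀ x : X, h (cX x) = cB (h x))
    (th : A → B)
    (hthdef : ∀ a : A, th a = h (q a) + f a)
    (hthadd : ∀ a a' : A, th (a + a') = th a + th a') :
    ∀ a : A, th (cA a) = cB (th a) :=
  induced_morphism_preserves_conjugation_general cX cA cB hA3 hB3 f r k q hr0 hrc hk0 hkc hfr hker
    hq1 hq2 h hh0 hhc th hthdef hthadd
end

section
/- Let $f:A\to B$ with section $r$, kernel $k:X\to A$, Schreier retraction $q$, be a Schreier split epimorphism of cancellative conjugation monoids, $h:X\to B$ a morphism satisfying $h(b\cdot x)+b=b+h(x)$ for all $b,x$, and $\tilde h(a)=h(q(a))+f(a)$. Then the following are equivalent: (i) $h(y)\cdot x + y = y + x$ for all $x,y\in X$; (ii) $k(\tilde h(a)\cdot x)+a = a+k(x)$ for all $a\in A$, $x\in X$. -/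
/-! The action `b · x = q (r b + k x)` of a Schreier split epimorphism is compatible with the
addition of `B`, and `k (b · x) + r b = r b + k x`. Writing `a = k (q a) + r (f a)`, the action of
`h (q a) + f a` on `x` is that of `h (q a)` on `f a · x`, so condition (ii) for `a` reduces to
condition (i) for `q a` and `f a · x`. Conversely (ii) for `a = k y` is (i) pushed forward along
the injective map `k`. -/

section SchreierSplitEpi

variable {X A B : Type*} {f : A → B} {r : B → A} {k : X → A} {q : A → X}

def schreierAction [Add A] (r : B → A) (k : X → A) (q : A → X) (b : B) (x : X) : X :=
  q (r b + k x)

lemma q_k_eq [AddMonoid A] [Zero B] (hr0 : r 0 = 0)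
    (hq2 : ∀ (x : X) (b : B), x = q (k x + r b)) (x : X) : q (k x) = x := by
  simpa [hr0] using (hq2 x 0).symm

lemma q_add_r [AddMonoid A] [Add B] (hradd : ∀ b b' : B, r (b + b') = r b + r b')
    (hq1 : ∀ a : A, a = k (q a) + r (f a)) (hq2 : ∀ (x : X) (b : B), x = q (k x + r b))
    (a : A) (b : B) : q (a + r b) = q a := by
  have ha : a + r b = k (q a) + r (f a + b) := by
    rw [hradd, ← add_assoc, ← hq1]
  rw [ha, ← hq2]

lemma k_schreierAction_add_r [AddMonoid A] [AddMonoid B]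
    (hfadd : ∀ a a' : A, f (a + a') = f a + f a') (hfr : ∀ b : B, f (r b) = b)
    (hker : ∀ x : X, f (k x) = 0) (hq1 : ∀ a : A, a = k (q a) + r (f a)) (b : B) (x : X) :
    k (schreierAction r k q b x) + r b = r b + k x := by
  have h := hq1 (r b + k x)
  rw [hfadd, hfr, hker, add_zero] at h
  exact h.symm

lemma schreierAction_add [AddMonoid A] [AddMonoid B]
    (hfadd : ∀ a a' : A, f (a + a') = f a + f a')
    (hradd : ∀ b b' : B, r (b + b') = r b + r b') (hfr : ∀ b : B, f (r b) = b)
    (hker : ∀ x : X, f (k x) = 0) (hq1 : ∀ a : A, a = k (q a) + r (f a))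
    (hq2 : ∀ (x : X) (b : B), x = q (k x + r b)) (b b' : B) (x : X) :
    schreierAction r k q (b + b') x = schreierAction r k q b (schreierAction r k q b' x) := by
  calc q (r (b + b') + k x)
      = q (r b + k (schreierAction r k q b' x) + r b') := by
        rw [add_assoc, k_schreierAction_add_r hfadd hfr hker hq1, hradd, add_assoc]
    _ = schreierAction r k q b (schreierAction r k q b' x) := q_add_r hradd hq1 hq2 _ _

lemma k_schreierAction_add_eq_of_forall_schreierAction_add_eq [Add X] [AddMonoid A] [AddMonoid B]
    (hfadd : ∀ a a' : A, f (a + a') = f a + f a')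
    (hradd : ∀ b b' : B, r (b + b') = r b + r b') (hfr : ∀ b : B, f (r b) = b)
    (hker : ∀ x : X, f (k x) = 0) (hq1 : ∀ a : A, a = k (q a) + r (f a))
    (hq2 : ∀ (x : X) (b : B), x = q (k x + r b))
    (hkadd : ∀ x x' : X, k (x + x') = k x + k x') {h : X → B}
    (hpeiffer : ∀ x y : X, schreierAction r k q (h y) x + y = y + x) (a : A) (x : X) :
    k (schreierAction r k q (h (q a) + f a) x) + a = a + k x := by
  set x' := schreierAction r k q (f a) x
  calc k (schreierAction r k q (h (q a) + f a) x) + a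
      = k (schreierAction r k q (h (q a)) x' + q a) + r (f a) := by
        rw [schreierAction_add hfadd hradd hfr hker hq1 hq2, hkadd, add_assoc, ← hq1]
    _ = k (q a) + (k x' + r (f a)) := by rw [hpeiffer, hkadd, add_assoc]
    _ = a + k x := by
        rw [k_schreierAction_add_r hfadd hfr hker hq1, ← add_assoc, ← hq1]

lemma schreierAction_add_eq_of_forall_k_schreierAction_add_eq [Add X] [AddMonoid A] [AddMonoid B]
    (hr0 : r 0 = 0)
    (hq2 : ∀ (x : X) (b : B), x = q (k x + r b)) (hker : ∀ x : X, f (k x) = 0)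
    (hkadd : ∀ x x' : X, k (x + x') = k x + k x') (hkinj : Function.Injective k) {h : X → B}
    (hcomm : ∀ (a : A) (x : X), k (schreierAction r k q (h (q a) + f a) x) + a = a + k x)
    (x y : X) : schreierAction r k q (h y) x + y = y + x := by
  have hy := hcomm (k y) x
  rw [q_k_eq hr0 hq2, hker, add_zero] at hy
  exact hkinj (by rw [hkadd, hkadd, hy])

end SchreierSplitEpi

theorem crossed_semimodule_condition_equiv_general
    {X A B : Type*} [AddCancelMonoid X] [AddCancelMonoid A] [AddCancelMonoid B]
    (f : A → B) (r : B → A) (k : X → A) (q : A → X)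
    (hfadd : ∀ a a' : A, f (a + a') = f a + f a')
    (hradd : ∀ b b' : B, r (b + b') = r b + r b') (hr0 : r 0 = 0)
    (hkadd : ∀ x x' : X, k (x + x') = k x + k x')
    (hfr : ∀ b : B, f (r b) = b)
    (hkinj : Function.Injective k)
    (hker : ∀ x : X, f (k x) = 0)
    (hq1 : ∀ a : A, a = k (q a) + r (f a))
    (hq2 : ∀ (x : X) (b : B), x = q (k x + r b))
    (h : X → B) :
    (∀ x y : X, q (r (h y) + k x) + y = y + x) ↔
      (∀ (a : A) (x : X), k (q (r (h (q a) + f a) + k x)) + a = a + k x) :=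
  ⟨k_schreierAction_add_eq_of_forall_schreierAction_add_eq hfadd hradd hfr hker hq1 hq2 hkadd,
    schreierAction_add_eq_of_forall_k_schreierAction_add_eq hr0 hq2 hker hkadd hkinj⟩

theorem crossed_semimodule_condition_equiv
    {X A B : Type*} [AddCancelMonoid X] [AddCancelMonoid A] [AddCancelMonoid B]
    (cX : X → X) (cA : A → A) (cB : B → B)
    (hX1 : ∀ x : X, cX x + x = x + cX x)
    (hX2 : ∀ x y : X, x + cX y + y = y + cX y + x)
    (hX3 : ∀ x y : X, cX (x + y) = cX y + cX x)
    (hA1 : ∀ a : A, cA a + a = a + cA a)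
    (hA2 : ∀ a a' : A, a + cA a' + a' = a' + cA a' + a)
    (hA3 : ∀ a a' : A, cA (a + a') = cA a' + cA a)
    (hB1 : ∀ b : B, cB b + b = b + cB b)
    (hB2 : ∀ b b' : B, b + cB b' + b' = b' + cB b' + b)
    (hB3 : ∀ b b' : B, cB (b + b') = cB b' + cB b)
    (f : A → B) (r : B → A) (k : X → A) (q : A → X)
    (hfadd : ∀ a a' : A, f (a + a') = f a + f a') (hf0 : f 0 = 0)
    (hfc : ∀ a : A, f (cA a) = cB (f a))
    (hradd : ∀ b b' : B, r (b + b') = r b + r b') (hr0 : r 0 = 0)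
    (hrc : ∀ b : B, r (cB b) = cA (r b))
    (hkadd : ∀ x x' : X, k (x + x') = k x + k x') (hk0 : k 0 = 0)
    (hkc : ∀ x : X, k (cX x) = cA (k x))
    (hfr : ∀ b : B, f (r b) = b)
    (hkinj : Function.Injective k)
    (hker : ∀ x : X, f (k x) = 0)
    (hker' : ∀ a : A, f a = 0 → ∃ x : X, k x = a)
    (hq1 : ∀ a : A, a = k (q a) + r (f a))
    (hq2 : ∀ (x : X) (b : B), x = q (k x + r b))
    (h : X → B)
    (hhadd : ∀ x x' : X, h (x + x') = h x + h x') (hh0 : h 0 = 0)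
    (hhc : ∀ x : X, h (cX x) = cB (h x))
    (hC1 : ∀ (b : B) (x : X), h (q (r b + k x)) + b = b + h x) :
    (∀ x y : X, q (r (h y) + k x) + y = y + x) ↔
      (∀ (a : A) (x : X), k (q (r (h (q a) + f a) + k x)) + a = a + k x) :=
  crossed_semimodule_condition_equiv_general f r k q hfadd hradd hr0 hkadd hfr hkinj hker hq1 hq2 h
end
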